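/- arXiv:2412.05304 — 3 statements merged into one kernel-verified Lean document; each statement's English description precedes it below -/
import Mathlib

section
/- For a pointed topological space (X, x₀), group inversion inv : π₁^wh(X, x₀) → π₁^wh(X, x₀), [ζ] ↦ [ζ⁻], is continuous if and only if π₁^wh(X, x₀) is a topological group (i.e., if and only if group multiplication ([ζ],[η]) ↦ [ζ·η] is jointly continuous and inversion is continuous). -/
open Set TopologicalSpace

attribute [local instance] Path.Homotopic.setoid

universe u v

variable {X : Type u} [TopologicalSpace X]

/-- The basic whisker-topology set `B([ζ],U)`: all classes of the form `[ζ·η]`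
where `η` is a loop based at `x₀` with image in `U`. -/
def whiskerB {x₀ : X} (ζ : Path.Homotopic.Quotient x₀ x₀) (U : Set X) :
    Set (Path.Homotopic.Quotient x₀ x₀) :=
  {g | ∃ η : Path x₀ x₀, Set.range η ⊆ U ∧ g = Path.Homotopic.Quotient.trans ζ ⟦η⟧}

/-- The whisker topology on `π₁(X, x₀)`, generated by the basic sets `B([ζ],U)`
for `U` an open neighborhood of `x₀`. -/
def whiskerTopology (x₀ : X) : TopologicalSpace (Path.Homotopic.Quotient x₀ x₀) :=
  TopologicalSpace.generateFrom
    {S | ∃ (ζ : Path.Homotopic.Quotient x₀ x₀) (U : Set X),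
      IsOpen U ∧ x₀ ∈ U ∧ S = whiskerB ζ U}

/-- Inversion `[ζ] ↦ [ζ⁻]` on `π₁(X, x₀)`. -/
def whiskerInv {x₀ : X} : Path.Homotopic.Quotient x₀ x₀ → Path.Homotopic.Quotient x₀ x₀ :=
  Quotient.map Path.symm (fun _ _ h => Nonempty.map Path.Homotopy.symm₂ h)

/-- `π₁^wh(X, x₀)` is a topological group: the multiplication `([ζ],[η]) ↦ [ζ·η]`
is jointly continuous and inversion `[ζ] ↦ [ζ⁻]` is continuous, with respect to
the whisker topology. -/
def IsWhiskerTopGroup (x₀ : X) : Prop :=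
  letI := whiskerTopology x₀
  Continuous (fun p : Path.Homotopic.Quotient x₀ x₀ × Path.Homotopic.Quotient x₀ x₀ =>
    Path.Homotopic.Quotient.trans p.1 p.2) ∧
  Continuous (whiskerInv (x₀ := x₀))


/-!
The sets `B(g, U)` form a neighbourhood base at `g`, and `B(g, U)` is stable under appending
loops in `U` and under left translation: `a · B(g, U) ⊆ B(a · g, U)`. Hence
`B(a, V) · B(b, U) ⊆ B(a · b, U)` as soon as every loop `μ` in `V` can be pushed past `b`,
i.e. `[μ] · b ∈ B(b, U)`. Writing `[μ] · b = (b⁻¹ · [μ⁻])⁻¹`, this says that inversion maps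
`B(b⁻¹, V)` into `B(b, U)`, which is what continuity of inversion at `b⁻¹` provides.
-/

namespace Path.Homotopic.Quotient

variable {x₀ x₁ x₂ : X}

theorem symm_symm (γ : Path.Homotopic.Quotient x₀ x₁) : γ.symm.symm = γ := by
  induction γ using Quotient.ind with | mk γ =>
  rw [← mk_symm, ← mk_symm, Path.symm_symm]

theorem trans_symm_rev (γ₀ : Path.Homotopic.Quotient x₀ x₁)
    (γ₁ : Path.Homotopic.Quotient x₁ x₂) : (γ₀.trans γ₁).symm = γ₁.symm.trans γ₀.symm := by
  induction γ₀ using Quotient.ind with | mk γ₀ =>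
  induction γ₁ using Quotient.ind with | mk γ₁ =>
  rw [← mk_trans, ← mk_symm, ← mk_symm, ← mk_symm, ← mk_trans, Path.trans_symm]

end Path.Homotopic.Quotient

namespace WhiskerTopology

open Filter Path.Homotopic.Quotient
open scoped Topology

local instance (x₀ : X) : TopologicalSpace (Path.Homotopic.Quotient x₀ x₀) :=
  whiskerTopology x₀

variable {x₀ : X}

theorem self_mem_whiskerB {U : Set X} (hU : x₀ ∈ U) (g : Path.Homotopic.Quotient x₀ x₀) :
    g ∈ whiskerB g U :=
  ⟨Path.refl x₀, by simpa using hU, (trans_refl g).symm⟩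

theorem whiskerB_mono {U V : Set X} (h : U ⊆ V) (g : Path.Homotopic.Quotient x₀ x₀) :
    whiskerB g U ⊆ whiskerB g V :=
  fun _ ⟨η, hη, he⟩ => ⟨η, hη.trans h, he⟩

theorem trans_mk_mem_whiskerB {g h : Path.Homotopic.Quotient x₀ x₀} {U : Set X}
    (hh : h ∈ whiskerB g U) {ν : Path x₀ x₀} (hν : range ν ⊆ U) :
    h.trans (mk ν) ∈ whiskerB g U := by
  obtain ⟨η, hη, rfl⟩ := hh
  exact ⟨η.trans ν, by simpa [Path.trans_range] using ⟨hη, hν⟩, trans_assoc _ _ _⟩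

theorem trans_mem_whiskerB_trans {g h : Path.Homotopic.Quotient x₀ x₀} {U : Set X}
    (hh : h ∈ whiskerB g U) (a : Path.Homotopic.Quotient x₀ x₀) :
    a.trans h ∈ whiskerB (a.trans g) U := by
  obtain ⟨η, hη, rfl⟩ := hh
  exact ⟨η, hη, (trans_assoc _ _ _).symm⟩

theorem whiskerB_subset_of_mem {g h : Path.Homotopic.Quotient x₀ x₀} {U : Set X}
    (hh : h ∈ whiskerB g U) : whiskerB h U ⊆ whiskerB g U := by
  rintro _ ⟨ν, hν, rfl⟩
  exact trans_mk_mem_whiskerB hh hν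

theorem isTopologicalBasis_whiskerB :
    IsTopologicalBasis {S : Set (Path.Homotopic.Quotient x₀ x₀) |
      ∃ (ζ : Path.Homotopic.Quotient x₀ x₀) (U : Set X), IsOpen U ∧ x₀ ∈ U ∧ S = whiskerB ζ U} where
  exists_subset_inter := by
    rintro _ ⟨ζ, U, hU, hxU, rfl⟩ _ ⟨ζ', U', hU', hxU', rfl⟩ g ⟨hg, hg'⟩
    refine ⟨whiskerB g (U ∩ U'), ⟨g, _, hU.inter hU', ⟨hxU, hxU'⟩, rfl⟩,
      self_mem_whiskerB (mem_inter hxU hxU') g, subset_inter ?_ ?_⟩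
    · exact (whiskerB_mono inter_subset_left g).trans (whiskerB_subset_of_mem hg)
    · exact (whiskerB_mono inter_subset_right g).trans (whiskerB_subset_of_mem hg')
  sUnion_eq := sUnion_eq_univ_iff.2 fun g =>
    ⟨whiskerB g univ, ⟨g, univ, isOpen_univ, mem_univ x₀, rfl⟩, self_mem_whiskerB (mem_univ x₀) g⟩
  eq_generateFrom := rfl

theorem nhds_hasBasis_whiskerB (g : Path.Homotopic.Quotient x₀ x₀) :
    (𝓝 g).HasBasis (fun U : Set X => IsOpen U ∧ x₀ ∈ U) (whiskerB g) := by
  refine isTopologicalBasis_whiskerB.nhds_hasBasis.to_hasBasis ?_ ?_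
  · rintro _ ⟨⟨ζ, U, hU, hxU, rfl⟩, hg⟩
    exact ⟨U, ⟨hU, hxU⟩, whiskerB_subset_of_mem hg⟩
  · rintro U ⟨hU, hxU⟩
    exact ⟨whiskerB g U, ⟨⟨g, U, hU, hxU, rfl⟩, self_mem_whiskerB hxU g⟩, subset_rfl⟩

theorem exists_mk_trans_mem_whiskerB (hinv : Continuous (whiskerInv (x₀ := x₀)))
    (b : Path.Homotopic.Quotient x₀ x₀) {U : Set X} (hU : IsOpen U) (hxU : x₀ ∈ U) :
    ∃ V : Set X, IsOpen V ∧ x₀ ∈ V ∧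
      ∀ μ : Path x₀ x₀, range μ ⊆ V → (mk μ).trans b ∈ whiskerB b U := by
  have hb : whiskerB b U ∈ 𝓝 b.symm.symm := by
    rw [symm_symm]
    exact (nhds_hasBasis_whiskerB b).mem_of_mem ⟨hU, hxU⟩
  obtain ⟨V, ⟨hV, hxV⟩, hVU⟩ := (nhds_hasBasis_whiskerB b.symm).mem_iff.1 (hinv.continuousAt hb)
  refine ⟨V, hV, hxV, fun μ hμ => ?_⟩
  have : (b.symm.trans (mk μ.symm)).symm ∈ whiskerB b U :=
    hVU ⟨μ.symm, by rwa [Path.symm_range], rfl⟩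
  rwa [trans_symm_rev, symm_symm, ← mk_symm, Path.symm_symm] at this

theorem continuous_trans_of_continuous_whiskerInv
    (hinv : Continuous (whiskerInv (x₀ := x₀))) :
    Continuous fun p : Path.Homotopic.Quotient x₀ x₀ × Path.Homotopic.Quotient x₀ x₀ =>
      p.1.trans p.2 := by
  refine continuous_iff_continuousAt.2 fun ⟨a, b⟩ => ?_
  refine ((nhds_hasBasis_whiskerB a).prod_nhds (nhds_hasBasis_whiskerB b)).tendsto_iff
    (nhds_hasBasis_whiskerB (a.trans b)) |>.2 fun U ⟨hU, hxU⟩ => ?_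
  obtain ⟨V, hV, hxV, hconj⟩ := exists_mk_trans_mem_whiskerB hinv b hU hxU
  refine ⟨(V, U), ⟨⟨hV, hxV⟩, hU, hxU⟩, ?_⟩
  rintro ⟨_, _⟩ ⟨⟨μ, hμ, rfl⟩, ⟨ν, hν, rfl⟩⟩
  show (a.trans (mk μ)).trans (b.trans (mk ν)) ∈ whiskerB (a.trans b) U
  rw [trans_assoc, ← trans_assoc (mk μ)]
  exact trans_mem_whiskerB_trans (trans_mk_mem_whiskerB (hconj μ hμ) hν) a

end WhiskerTopology

/-- Group inversion `[ζ] ↦ [ζ⁻]` on `π₁^wh(X, x₀)` is continuous if and only if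
`π₁^wh(X, x₀)` is a topological group (multiplication jointly continuous and
inversion continuous). -/
theorem whisker_inv_continuous_iff_topGroup (x₀ : X) :
    (@Continuous _ _ (whiskerTopology x₀) (whiskerTopology x₀) (whiskerInv (x₀ := x₀))) ↔
    IsWhiskerTopGroup x₀ :=
  ⟨fun hinv => ⟨WhiskerTopology.continuous_trans_of_continuous_whiskerInv hinv, hinv⟩, And.right⟩
end

section
/- For a pointed topological space (X, x₀), the space π₁^wh(X, x₀) is discrete if and only if X is semilocally simply connected at x₀, i.e., there exists an open neighborhood U of x₀ such that every loop based at x₀ with image in U is null-homotopic in X. -/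
open Set TopologicalSpace

attribute [local instance] Path.Homotopic.setoid

universe u v

variable {X : Type u} [TopologicalSpace X]

/-!
The basic sets `whiskerB g U` form a neighbourhood basis of `g`: if `g ∈ whiskerB ζ U`, then
`whiskerB g U ⊆ whiskerB ζ U`, which also takes care of finite intersections. So `{[refl]}` is
open exactly when some `whiskerB [refl] U`, the classes of loops in `U`, is trivial; and then
every `whiskerB g U = g · whiskerB [refl] U` is the singleton `{g}`.
-/

open Topology

lemma mem_whiskerB_self {x₀ : X} (g : Path.Homotopic.Quotient x₀ x₀) {U : Set X}
    (hU : x₀ ∈ U) : g ∈ whiskerB g U :=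
  ⟨Path.refl x₀, range_subset_iff.mpr fun _ => hU, (Path.Homotopic.Quotient.trans_refl g).symm⟩

lemma mk_mem_whiskerB_refl {x₀ : X} {η : Path x₀ x₀} {U : Set X} (hη : range η ⊆ U) :
    Path.Homotopic.Quotient.mk η ∈ whiskerB (Path.Homotopic.Quotient.refl x₀) U :=
  ⟨η, hη, (Path.Homotopic.Quotient.refl_trans _).symm⟩

lemma whiskerB_subset_of_mem {x₀ : X} {ζ g : Path.Homotopic.Quotient x₀ x₀} {U V : Set X}
    (hg : g ∈ whiskerB ζ U) (hVU : V ⊆ U) : whiskerB g V ⊆ whiskerB ζ U := by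
  obtain ⟨η, hη, rfl⟩ := hg
  rintro _ ⟨η', hη', rfl⟩
  exact ⟨η.trans η', by rw [Path.trans_range]; exact union_subset hη (hη'.trans hVU),
    Path.Homotopic.Quotient.trans_assoc _ _ _⟩

lemma isOpen_whiskerB {x₀ : X} (ζ : Path.Homotopic.Quotient x₀ x₀) {U : Set X}
    (hU : IsOpen U) (hx₀ : x₀ ∈ U) : IsOpen[whiskerTopology x₀] (whiskerB ζ U) :=
  GenerateOpen.basic _ ⟨ζ, U, hU, hx₀, rfl⟩

lemma exists_whiskerB_subset_of_isOpen {x₀ : X} {s : Set (Path.Homotopic.Quotient x₀ x₀)}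
    (hs : IsOpen[whiskerTopology x₀] s) {g : Path.Homotopic.Quotient x₀ x₀} (hg : g ∈ s) :
    ∃ U : Set X, IsOpen U ∧ x₀ ∈ U ∧ whiskerB g U ⊆ s := by
  induction hs with
  | basic t ht =>
    obtain ⟨ζ, U, hU, hx₀, rfl⟩ := ht
    exact ⟨U, hU, hx₀, whiskerB_subset_of_mem hg subset_rfl⟩
  | univ => exact ⟨univ, isOpen_univ, mem_univ _, subset_univ _⟩
  | inter t₁ t₂ _ _ ih₁ ih₂ =>
    obtain ⟨U₁, hU₁, hx₁, hsub₁⟩ := ih₁ hg.1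
    obtain ⟨U₂, hU₂, hx₂, hsub₂⟩ := ih₂ hg.2
    refine ⟨U₁ ∩ U₂, hU₁.inter hU₂, ⟨hx₁, hx₂⟩, subset_inter ?_ ?_⟩
    · exact (whiskerB_subset_of_mem (mem_whiskerB_self g hx₁) inter_subset_left).trans hsub₁
    · exact (whiskerB_subset_of_mem (mem_whiskerB_self g hx₂) inter_subset_right).trans hsub₂
  | sUnion S _ ih =>
    obtain ⟨t, htS, hgt⟩ := hg
    obtain ⟨U, hU, hx₀, hsub⟩ := ih t htS hgt
    exact ⟨U, hU, hx₀, hsub.trans (subset_sUnion_of_mem htS)⟩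

lemma whiskerB_eq_singleton {x₀ : X} (g : Path.Homotopic.Quotient x₀ x₀) {U : Set X}
    (hx₀ : x₀ ∈ U) (hU : ∀ η : Path x₀ x₀, range η ⊆ U → η.Homotopic (Path.refl x₀)) :
    whiskerB g U = {g} := by
  refine Subset.antisymm ?_ (singleton_subset_iff.mpr (mem_whiskerB_self g hx₀))
  rintro _ ⟨η, hη, rfl⟩
  have hnull : Path.Homotopic.Quotient.mk η = Path.Homotopic.Quotient.refl x₀ :=
    Path.Homotopic.Quotient.eq.mpr (hU η hη)
  exact (congrArg g.trans hnull).trans (Path.Homotopic.Quotient.trans_refl g)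

/-- `π₁^wh(X, x₀)` is discrete if and only if `X` is semilocally simply
connected at `x₀`: there is an open neighborhood `U` of `x₀` such that every loop based
at `x₀` with image in `U` is null-homotopic in `X`. -/
theorem whisker_discrete_iff_semilocally_simply_connected (x₀ : X) :
    whiskerTopology x₀ = ⊥ ↔
    ∃ U : Set X, IsOpen U ∧ x₀ ∈ U ∧
      ∀ η : Path x₀ x₀, Set.range ⇑η ⊆ U → η.Homotopic (Path.refl x₀) := by
  constructor
  · intro hbot
    have hopen : IsOpen[whiskerTopology x₀] {Path.Homotopic.Quotient.refl x₀} := hbot ▸ trivial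
    obtain ⟨U, hU, hx₀, hsub⟩ := exists_whiskerB_subset_of_isOpen hopen rfl
    exact ⟨U, hU, hx₀, fun η hη =>
      Path.Homotopic.Quotient.eq.mp (mem_singleton_iff.mp (hsub (mk_mem_whiskerB_refl hη)))⟩
  · rintro ⟨U, hU, hx₀, hnull⟩
    refine eq_bot_of_singletons_open fun g => ?_
    rw [← whiskerB_eq_singleton g hx₀ hnull]
    exact isOpen_whiskerB g hU hx₀
end

section
/- Let (X, x₀) be a pointed topological space. If π₁^wh(X, x₀) is Hausdorff, then π₁^wh(X, x₀) is totally separated: for any two distinct points a, b there is a clopen set containing a but not b. -/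
open Set TopologicalSpace

attribute [local instance] Path.Homotopic.setoid

universe u v

variable {X : Type u} [TopologicalSpace X]

/-! Fixing the neighbourhood `U`, the sets `whiskerB ζ U` are the left cosets `ζ·H_U` of the
subgroup `H_U` of classes of loops in `U`; hence they partition `π₁(X, x₀)`, and each one is
closed, its complement being a union of other cosets. A topology generated by clopen sets has a
clopen basis, and a T₀ space with a clopen basis is totally separated. -/

theorem TopologicalSpace.isTopologicalBasis_isClopen_of_subbasis {α : Type*}
    [t : TopologicalSpace α] {s : Set (Set α)} (hs : t = generateFrom s)
    (hclopen : ∀ u ∈ s, IsClopen u) : IsTopologicalBasis {u : Set α | IsClopen u} := by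
  refine isTopologicalBasis_of_isOpen_of_nhds (fun _ hu => hu.isOpen) fun a u ha hu => ?_
  obtain ⟨_, ⟨f, ⟨hf, hfs⟩, rfl⟩, haf, hfu⟩ :=
    (isTopologicalBasis_of_subbasis hs).exists_subset_of_mem_open ha hu
  refine ⟨⋂₀ f, ?_, haf, hfu⟩
  rw [sInter_eq_biInter]
  exact hf.isClopen_biInter fun v hv => hclopen v (hfs hv)

namespace Path.Homotopic.Quotient

variable {x₀ : X} {a b ζ : Path.Homotopic.Quotient x₀ x₀} {U : Set X}

theorem mem_whiskerB_self (hx₀ : x₀ ∈ U) : a ∈ whiskerB a U :=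
  ⟨Path.refl x₀, by simpa [Set.range_subset_iff] using hx₀, (trans_refl a).symm⟩

theorem whiskerB_subset_of_mem (ha : a ∈ whiskerB ζ U) : whiskerB a U ⊆ whiskerB ζ U := by
  obtain ⟨η, hη, rfl⟩ := ha
  rintro _ ⟨θ, hθ, rfl⟩
  refine ⟨η.trans θ, ?_, trans_assoc _ _ _⟩
  rw [Path.trans_range]
  exact union_subset hη hθ

theorem mem_whiskerB_comm (ha : a ∈ whiskerB b U) : b ∈ whiskerB a U := by
  obtain ⟨η, hη, rfl⟩ := ha
  refine ⟨η.symm, by rwa [Path.symm_range], ?_⟩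
  change b = trans (trans b (mk η)) (symm (mk η))
  rw [trans_assoc, trans_symm, trans_refl]

theorem isOpen_whiskerB (ζ : Path.Homotopic.Quotient x₀ x₀) (hU : IsOpen U) (hx₀ : x₀ ∈ U) :
    @IsOpen _ (whiskerTopology x₀) (whiskerB ζ U) :=
  isOpen_generateFrom_of_mem ⟨ζ, U, hU, hx₀, rfl⟩

theorem isClopen_whiskerB (ζ : Path.Homotopic.Quotient x₀ x₀) (hU : IsOpen U) (hx₀ : x₀ ∈ U) :
    @IsClopen _ (whiskerTopology x₀) (whiskerB ζ U) := by
  let := whiskerTopology x₀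
  refine ⟨isOpen_compl_iff.mp <| isOpen_iff_forall_mem_open.mpr fun a ha => ?_,
    isOpen_whiskerB ζ hU hx₀⟩
  refine ⟨whiskerB a U, fun b hb hbζ => ha ?_, isOpen_whiskerB a hU hx₀, mem_whiskerB_self hx₀⟩
  exact whiskerB_subset_of_mem hbζ (mem_whiskerB_comm hb)

end Path.Homotopic.Quotient

/-- If `π₁^wh(X, x₀)` is Hausdorff, then it is totally separated: for any two
distinct points `a, b` there is a clopen set containing `a` but not `b`. -/
theorem whisker_totally_separated_of_t2 (x₀ : X)
    (h : @T2Space _ (whiskerTopology x₀)) :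
    ∀ a b : Path.Homotopic.Quotient x₀ x₀, a ≠ b →
      ∃ C : Set (Path.Homotopic.Quotient x₀ x₀),
        @IsClopen _ (whiskerTopology x₀) C ∧ a ∈ C ∧ b ∉ C := by
  let := whiskerTopology x₀
  have hbasis : IsTopologicalBasis {C : Set (Path.Homotopic.Quotient x₀ x₀) | IsClopen C} :=
    isTopologicalBasis_isClopen_of_subbasis rfl <| by
      rintro _ ⟨ζ, U, hU, hx₀, rfl⟩
      exact Path.Homotopic.Quotient.isClopen_whiskerB ζ hU hx₀
  have := totallySeparatedSpace_of_t0_of_basis_clopen hbasis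
  exact fun a b hab => exists_isClopen_of_totally_separated hab
end
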